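/- Each of the following three bilinear operations ▷ on Sweedler's 4-dimensional Hopf algebra H₄, defined on the basis with ν▷x = 0 and gν▷x = 0 for all x ∈ {1, g, ν, gν} in all three cases, is a relaxed weak post-Hopf structure on H₄ that is not unital (i.e., 1▷ is not the identity): (iv) 1▷: 1↦1, g↦g, ν↦0, gν↦0 and g▷: 1↦1, g↦g, ν↦0, gν↦0; (v) 1▷: 1↦1, g↦g, ν↦0, gν↦0 and g▷: 1↦1, g↦1, ν↦0, gν↦0; (vi) 1▷: 1↦1, g↦1, ν↦0, gν↦0 and g▷: 1↦1, g↦1, ν↦0, gν↦0. -/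
import Mathlib


open TensorProduct Coalgebra

/-- `H`, together with the chosen elements `g` and `ν`, is a copy of Sweedler's
4-dimensional Hopf algebra over `k`: `{1, g, ν, gν}` is a basis, the defining relations
`g² = 1`, `ν² = 0`, `gν + νg = 0` hold, and the comultiplication, counit and antipode
take the prescribed values on `g` and `ν`. -/
structure IsSweedlerHopf (k : Type*) {H : Type*} [Field k] [Ring H]
    [HopfAlgebra k H] (g ν : H) : Prop where
  g_sq : g * g = 1
  ν_sq : ν * ν = 0
  anticomm : g * ν + ν * g = 0
  comul_g : comul (R := k) g = g ⊗ₜ[k] g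
  comul_ν : comul (R := k) ν = g ⊗ₜ[k] ν + ν ⊗ₜ[k] (1 : H)
  counit_g : counit (R := k) g = 1
  counit_ν : counit (R := k) ν = 0
  antipode_g : HopfAlgebra.antipode (R := k) g = g
  antipode_ν : HopfAlgebra.antipode (R := k) ν = -(g * ν)
  basis_indep : LinearIndependent k ![(1 : H), g, ν, g * ν]
  basis_span : Submodule.span k {(1 : H), g, ν, g * ν} = ⊤

/-- A relaxed weak post-Hopf structure on a Hopf algebra `H` over `k`:
a bilinear operation `t` (written `x ▷ y := t x y`) which, as a map `H ⊗ H → H`, is a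
coalgebra homomorphism (i.e. `Δ(x ▷ y) = (x₁ ▷ y₁) ⊗ (x₂ ▷ y₂)` and
`ε(x ▷ y) = ε(x) ε(y)`), and which satisfies `x ▷ (y z) = (x₁ ▷ y) (x₂ ▷ z)` and
`x ▷ (y ▷ z) = (x₁ (x₂ ▷ y)) ▷ z` (Sweedler notation expressed via `comul`). -/
structure IsRelaxedWeakPostHopf (k : Type*) {H : Type*} [CommSemiring k] [Semiring H]
    [HopfAlgebra k H] (t : H →ₗ[k] H →ₗ[k] H) : Prop where
  comul_hom : ∀ x y : H,
    comul (R := k) (t x y) =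
      (TensorProduct.map (TensorProduct.lift t) (TensorProduct.lift t))
        ((TensorProduct.tensorTensorTensorComm k H H H H)
          (comul (R := k) x ⊗ₜ[k] comul (R := k) y))
  counit_hom : ∀ x y : H,
    counit (R := k) (t x y) = counit (R := k) x * counit (R := k) y
  mul_compat : ∀ x y z : H,
    t x (y * z) =
      (LinearMap.mul' k H ∘ₗ TensorProduct.map (t.flip y) (t.flip z)) (comul (R := k) x)
  act_compat : ∀ x y z : H,
    t x (t y z) =
      (t.flip z ∘ₗ LinearMap.mul' k H ∘ₗ TensorProduct.map LinearMap.id (t.flip y))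
        (comul (R := k) x)

namespace IsSweedlerHopf

variable {k H : Type*} [Field k] [Ring H] [HopfAlgebra k H] {g ν : H}

theorem ind (hs : IsSweedlerHopf k g ν) {P : H → Prop} (x : H)
    (h1 : P 1) (hg : P g) (hv : P ν) (hgv : P (g * ν))
    (hadd : ∀ u v, P u → P v → P (u + v))
    (hsmul : ∀ (r : k) (u : H), P u → P (r • u)) : P x := by
  have hx : x ∈ Submodule.span k {(1 : H), g, ν, g * ν} := hs.basis_span ▸ Submodule.mem_top
  refine Submodule.span_induction (p := fun y _ => P y) ?_ ?_ ?_ ?_ hx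
  · intro u hu
    simp only [Set.mem_insert_iff, Set.mem_singleton_iff] at hu
    rcases hu with rfl | rfl | rfl | rfl <;> assumption
  · simpa using hsmul 0 1 h1
  · exact fun u v _ _ => hadd u v
  · exact fun r u _ => hsmul r u

theorem ind₂ (hs : IsSweedlerHopf k g ν) {P : H → H → Prop}
    (hb : ∀ x ∈ ({1, g, ν, g * ν} : Set H), ∀ y ∈ ({1, g, ν, g * ν} : Set H), P x y)
    (hal : ∀ u v y, P u y → P v y → P (u + v) y)
    (hsl : ∀ (r : k) u y, P u y → P (r • u) y)
    (har : ∀ x u v, P x u → P x v → P x (u + v))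
    (hsr : ∀ (r : k) x u, P x u → P x (r • u)) (x y : H) : P x y := by
  have hx : ∀ x ∈ ({1, g, ν, g * ν} : Set H), ∀ y, P x y := by
    intro x hxm y
    exact hs.ind y (hb x hxm 1 (by simp)) (hb x hxm g (by simp)) (hb x hxm ν (by simp))
      (hb x hxm (g * ν) (by simp)) (har x) (fun r u h => hsr r x u h)
  exact hs.ind (P := fun x => P x y) x (hx 1 (by simp) y) (hx g (by simp) y)
    (hx ν (by simp) y) (hx (g * ν) (by simp) y)
    (fun u v hu hv => hal u v y hu hv) (fun r u h => hsl r u y h)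

theorem ind₃ (hs : IsSweedlerHopf k g ν) {P : H → H → H → Prop}
    (hb : ∀ x ∈ ({1, g, ν, g * ν} : Set H), ∀ y ∈ ({1, g, ν, g * ν} : Set H),
      ∀ z ∈ ({1, g, ν, g * ν} : Set H), P x y z)
    (ha1 : ∀ u v y z, P u y z → P v y z → P (u + v) y z)
    (hs1 : ∀ (r : k) u y z, P u y z → P (r • u) y z)
    (ha2 : ∀ x u v z, P x u z → P x v z → P x (u + v) z)
    (hs2 : ∀ (r : k) x u z, P x u z → P x (r • u) z)
    (ha3 : ∀ x y u v, P x y u → P x y v → P x y (u + v))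
    (hs3 : ∀ (r : k) x y u, P x y u → P x y (r • u)) (x y z : H) : P x y z := by
  have hx : ∀ x ∈ ({1, g, ν, g * ν} : Set H), ∀ y z, P x y z := by
    intro x hxm y z
    exact hs.ind₂ (hb x hxm) (fun u v z hu hv => ha2 x u v z hu hv)
      (fun r u z h => hs2 r x u z h) (fun y u v hu hv => ha3 x y u v hu hv)
      (fun r y u h => hs3 r x y u h) y z
  exact hs.ind (P := fun x => P x y z) x (hx 1 (by simp) y z) (hx g (by simp) y z)
    (hx ν (by simp) y z) (hx (g * ν) (by simp) y z)
    (fun u v hu hv => ha1 u v y z hu hv) (fun r u h => hs1 r u y z h)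

end IsSweedlerHopf

set_option maxHeartbeats 4000000 in
/-- Each of the three tables (iv), (v), (vi) defines a relaxed weak post-Hopf structure on
Sweedler's Hopf algebra that is not unital (i.e. `1 ▷` is not the identity). -/
theorem sweedler_forms_iv_v_vi_isRelaxedWeakPostHopf_not_unital {k H : Type*} [Field k] [CharZero k] [Ring H] [HopfAlgebra k H]
    (g ν : H) (hs : IsSweedlerHopf k g ν)
    (t : H →ₗ[k] H →ₗ[k] H) :
    (((t (1 : H) (1 : H) = (1 : H) ∧
      t (1 : H) g = g ∧
      t (1 : H) ν = 0 ∧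
      t (1 : H) (g * ν) = 0 ∧
      t g (1 : H) = (1 : H) ∧
      t g g = g ∧
      t g ν = 0 ∧
      t g (g * ν) = 0 ∧
      t ν (1 : H) = 0 ∧
      t ν g = 0 ∧
      t ν ν = 0 ∧
      t ν (g * ν) = 0 ∧
      t (g * ν) (1 : H) = 0 ∧
      t (g * ν) g = 0 ∧
      t (g * ν) ν = 0 ∧
      t (g * ν) (g * ν) = 0) →
        IsRelaxedWeakPostHopf k t ∧ ¬ (∀ x : H, t 1 x = x)) ∧
     ((t (1 : H) (1 : H) = (1 : H) ∧
      t (1 : H) g = g ∧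
      t (1 : H) ν = 0 ∧
      t (1 : H) (g * ν) = 0 ∧
      t g (1 : H) = (1 : H) ∧
      t g g = (1 : H) ∧
      t g ν = 0 ∧
      t g (g * ν) = 0 ∧
      t ν (1 : H) = 0 ∧
      t ν g = 0 ∧
      t ν ν = 0 ∧
      t ν (g * ν) = 0 ∧
      t (g * ν) (1 : H) = 0 ∧
      t (g * ν) g = 0 ∧
      t (g * ν) ν = 0 ∧
      t (g * ν) (g * ν) = 0) →
        IsRelaxedWeakPostHopf k t ∧ ¬ (∀ x : H, t 1 x = x)) ∧
     ((t (1 : H) (1 : H) = (1 : H) ∧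
      t (1 : H) g = (1 : H) ∧
      t (1 : H) ν = 0 ∧
      t (1 : H) (g * ν) = 0 ∧
      t g (1 : H) = (1 : H) ∧
      t g g = (1 : H) ∧
      t g ν = 0 ∧
      t g (g * ν) = 0 ∧
      t ν (1 : H) = 0 ∧
      t ν g = 0 ∧
      t ν ν = 0 ∧
      t ν (g * ν) = 0 ∧
      t (g * ν) (1 : H) = 0 ∧
      t (g * ν) g = 0 ∧
      t (g * ν) ν = 0 ∧
      t (g * ν) (g * ν) = 0) →
        IsRelaxedWeakPostHopf k t ∧ ¬ (∀ x : H, t 1 x = x))) := by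
  have hνg : ν * g = -(g * ν) := eq_neg_of_add_eq_zero_right hs.anticomm
  have hggν : g * (g * ν) = ν := by rw [← mul_assoc, hs.g_sq, one_mul]
  have hgνg : g * ν * g = -ν := by rw [mul_assoc, hνg, mul_neg, hggν]
  have hνgν : ν * (g * ν) = 0 := by
    rw [← mul_assoc, hνg, neg_mul, mul_assoc, hs.ν_sq, mul_zero, neg_zero]
  have hgνν : g * ν * ν = 0 := by rw [mul_assoc, hs.ν_sq, mul_zero]
  have hgνgν : g * ν * (g * ν) = 0 := by rw [mul_assoc, hνgν, mul_zero]
  have hcgν : comul (R := k) (g * ν) = (1 : H) ⊗ₜ[k] (g * ν) + (g * ν) ⊗ₜ[k] g := by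
    rw [Bialgebra.comul_mul, hs.comul_g, hs.comul_ν, mul_add,
      Algebra.TensorProduct.tmul_mul_tmul, Algebra.TensorProduct.tmul_mul_tmul,
      hs.g_sq, mul_one]
  have hεgν : counit (R := k) (g * ν) = 0 := by
    rw [Bialgebra.counit_mul, hs.counit_ν, mul_zero]
  have hν0 : ν ≠ 0 := by simpa using hs.basis_indep.ne_zero 2
  refine ⟨?_, ?_, ?_⟩ <;>
  · rintro ⟨h1, h2, h3, h4, h5, h6, h7, h8, h9, h10, h11, h12, h13, h14, h15, h16⟩
    have tν : ∀ y : H, t ν y = 0 := fun y => by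
      refine hs.ind (P := fun y => t ν y = 0) y h9 h10 h11 h12 ?_ ?_ <;> intros <;> simp_all
    have tgν : ∀ y : H, t (g * ν) y = 0 := fun y => by
      refine hs.ind (P := fun y => t (g * ν) y = 0) y h13 h14 h15 h16 ?_ ?_ <;> intros <;> simp_all
    have tν' : ∀ x : H, t x ν = 0 := fun x => by
      refine hs.ind (P := fun x => t x ν = 0) x h3 h7 h11 h15 ?_ ?_ <;> intros <;>
        simp_all [map_add, LinearMap.add_apply, map_smul, LinearMap.smul_apply]
    have tgν' : ∀ x : H, t x (g * ν) = 0 := fun x => by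
      refine hs.ind (P := fun x => t x (g * ν) = 0) x h4 h8 h12 h16 ?_ ?_ <;> intros <;>
        simp_all [map_add, LinearMap.add_apply, map_smul, LinearMap.smul_apply]
    refine ⟨⟨?_, ?_, ?_, ?_⟩, ?_⟩
    · -- comul_hom
      intro x y
      refine hs.ind₂ (P := fun x y => comul (R := k) (t x y) =
          (TensorProduct.map (TensorProduct.lift t) (TensorProduct.lift t))
            ((TensorProduct.tensorTensorTensorComm k H H H H)
              (comul (R := k) x ⊗ₜ[k] comul (R := k) y)))
        (fun x hx y hy => ?_) ?_ ?_ ?_ ?_ x y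
      · simp only [Set.mem_insert_iff, Set.mem_singleton_iff] at hx hy
        rcases hx with rfl | rfl | rfl | rfl <;> rcases hy with rfl | rfl | rfl | rfl <;>
          simp [h1, h2, h3, h4, h5, h6, h7, h8, tν, tgν, hs.comul_g, hs.comul_ν, hcgν,
            Algebra.TensorProduct.one_def, tmul_add, add_tmul,
            TensorProduct.tensorTensorTensorComm_tmul, TensorProduct.map_tmul,
            TensorProduct.lift.tmul]
      all_goals intros
      all_goals simp_all [map_add, map_smul, LinearMap.add_apply, LinearMap.smul_apply,
        add_tmul, tmul_add, ← smul_tmul', tmul_smul]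
    · -- counit_hom
      intro x y
      refine hs.ind₂ (P := fun x y => counit (R := k) (t x y) =
          counit (R := k) x * counit (R := k) y)
        (fun x hx y hy => ?_) ?_ ?_ ?_ ?_ x y
      · simp only [Set.mem_insert_iff, Set.mem_singleton_iff] at hx hy
        rcases hx with rfl | rfl | rfl | rfl <;> rcases hy with rfl | rfl | rfl | rfl <;>
          simp [h1, h2, h3, h4, h5, h6, h7, h8, tν, tgν, hs.counit_g, hs.counit_ν, hεgν]
      all_goals intros
      all_goals simp_all [map_add, map_smul, LinearMap.add_apply, LinearMap.smul_apply,
        add_mul, mul_add, smul_mul_assoc, mul_smul_comm, mul_assoc, mul_left_comm]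
    · -- mul_compat
      intro x y z
      refine hs.ind₃ (P := fun x y z => t x (y * z) =
          (LinearMap.mul' k H ∘ₗ TensorProduct.map (t.flip y) (t.flip z)) (comul (R := k) x))
        (fun x hx y hy z hz => ?_) ?_ ?_ ?_ ?_ ?_ ?_ x y z
      · simp only [Set.mem_insert_iff, Set.mem_singleton_iff] at hx hy hz
        rcases hx with rfl | rfl | rfl | rfl <;> rcases hy with rfl | rfl | rfl | rfl <;>
          rcases hz with rfl | rfl | rfl | rfl <;>
          simp [h1, h2, h3, h4, h5, h6, h7, h8, tν, tgν, tν', tgν', hνg, hggν, hgνg,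
            hνgν, hgνν, hgνgν, hs.g_sq, hs.ν_sq, hs.comul_g, hs.comul_ν, hcgν,
            Algebra.TensorProduct.one_def, TensorProduct.map_tmul, LinearMap.mul'_apply,
            tmul_add, add_tmul]
      all_goals intros
      all_goals simp_all [map_add, map_smul, LinearMap.add_apply, LinearMap.smul_apply,
        add_mul, mul_add, smul_mul_assoc, mul_smul_comm, add_tmul, tmul_add, smul_tmul',
        tmul_smul, TensorProduct.map_add_left, TensorProduct.map_add_right,
        TensorProduct.map_smul_left, TensorProduct.map_smul_right]
    · -- act_compat
      intro x y z
      refine hs.ind₃ (P := fun x y z => t x (t y z) =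
          (t.flip z ∘ₗ LinearMap.mul' k H ∘ₗ TensorProduct.map LinearMap.id (t.flip y))
            (comul (R := k) x))
        (fun x hx y hy z hz => ?_) ?_ ?_ ?_ ?_ ?_ ?_ x y z
      · simp only [Set.mem_insert_iff, Set.mem_singleton_iff] at hx hy hz
        rcases hx with rfl | rfl | rfl | rfl <;> rcases hy with rfl | rfl | rfl | rfl <;>
          rcases hz with rfl | rfl | rfl | rfl <;>
          simp [h1, h2, h3, h4, h5, h6, h7, h8, tν, tgν, tν', tgν', hνg, hggν, hgνg,
            hνgν, hgνν, hgνgν, hs.g_sq, hs.ν_sq, hs.comul_g, hs.comul_ν, hcgν,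
            Algebra.TensorProduct.one_def, TensorProduct.map_tmul, LinearMap.mul'_apply,
            tmul_add, add_tmul]
      all_goals intros
      all_goals simp_all [map_add, map_smul, LinearMap.add_apply, LinearMap.smul_apply,
        add_mul, mul_add, smul_mul_assoc, mul_smul_comm, add_tmul, tmul_add, smul_tmul',
        tmul_smul, TensorProduct.map_add_left, TensorProduct.map_add_right,
        TensorProduct.map_smul_left, TensorProduct.map_smul_right]
    · -- not unital
      intro hall
      exact hν0 ((h3.symm.trans (hall ν)).symm)
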